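/- (Error bound, Lemma 1) Let d : Fin D → ℝ be the degrees of the D ≥ 1 neighbors of a node u, with a ≤ d(i) ≤ b for all i and a < b, let λ > 0 be the diffusion probability, and let J₁, …, J_q (q ≥ 1) be independent random variables on (Ω, ℙ), each uniformly distributed on Fin D. Let DDS = λ·(D + (D/q)·∑_{l=1}^{q} d(J_l)) and DD = λ·(D + ∑_{i} d(i)). Then for every ε ∈ (0, 1), ℙ(|DDS − DD| ≥ ε·(b − a)·D·λ) ≤ 2·exp(−2·q·ε²). -/

import Mathlib

open MeasureTheory ProbabilityTheory
open Real

lemma hoeff_calc {p : ℝ} (hp0 : 0 ≤ p) (hp1 : p ≤ 1) {h : ℝ} (hh : 0 ≤ h) :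
    (1 - p) * Real.exp (-p * h) + p * Real.exp ((1 - p) * h) ≤ Real.exp (h ^ 2 / 8) := by
  have hDpos : ∀ x : ℝ, 0 < 1 - p + p * Real.exp x := by
    intro x
    rcases lt_or_eq_of_le hp1 with h1 | h1
    · have := Real.exp_pos x
      nlinarith
    · subst h1
      simpa using Real.exp_pos x
  -- f = h²/8 + p h − log(1−p+p e^h)
  set f : ℝ → ℝ := fun x => x ^ 2 / 8 + p * x - Real.log (1 - p + p * Real.exp x) with hf_def
  set f1 : ℝ → ℝ := fun x => x / 4 + p - p * Real.exp x / (1 - p + p * Real.exp x) with hf1_def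
  have hD : ∀ x : ℝ, HasDerivAt (fun x => 1 - p + p * Real.exp x) (p * Real.exp x) x := by
    intro x
    exact ((Real.hasDerivAt_exp x).const_mul p).const_add (1 - p)
  have hf : ∀ x, HasDerivAt f (f1 x) x := by
    intro x
    have h1 : HasDerivAt (fun x : ℝ => x ^ 2 / 8) (x / 4) x := by
      have := (hasDerivAt_pow 2 x).div_const 8
      refine this.congr_deriv ?_; push_cast; ring
    have h2 : HasDerivAt (fun x : ℝ => p * x) p x := by
      simpa using (hasDerivAt_id x).const_mul p
    have h3 : HasDerivAt (fun x => Real.log (1 - p + p * Real.exp x))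
        (p * Real.exp x / (1 - p + p * Real.exp x)) x := (hD x).log (hDpos x).ne'
    exact ((h1.add h2).sub h3)
  have hf1 : ∀ x, HasDerivAt f1
      (1 / 4 - (p * Real.exp x * (1 - p + p * Real.exp x) - p * Real.exp x * (p * Real.exp x))
        / (1 - p + p * Real.exp x) ^ 2) x := by
    intro x
    have h1 : HasDerivAt (fun x : ℝ => x / 4 + p) (1 / 4) x := by
      simpa using ((hasDerivAt_id x).div_const 4).add_const p
    have h2 : HasDerivAt (fun x => p * Real.exp x / (1 - p + p * Real.exp x))
        ((p * Real.exp x * (1 - p + p * Real.exp x) - p * Real.exp x * (p * Real.exp x))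
          / (1 - p + p * Real.exp x) ^ 2) x :=
      ((Real.hasDerivAt_exp x).const_mul p).div (hD x) (hDpos x).ne'
    exact h1.sub h2
  have hf1nonneg : ∀ x, 0 ≤ 1 / 4 -
      (p * Real.exp x * (1 - p + p * Real.exp x) - p * Real.exp x * (p * Real.exp x))
        / (1 - p + p * Real.exp x) ^ 2 := by
    intro x
    rw [sub_nonneg, div_le_iff₀ (pow_pos (hDpos x) 2)]
    nlinarith [sq_nonneg (1 - p + p * Real.exp x - 2 * (p * Real.exp x))]
  have hf1mono : Monotone f1 :=
    monotone_of_deriv_nonneg (fun x => (hf1 x).differentiableAt)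
      (fun x => by rw [(hf1 x).deriv]; exact hf1nonneg x)
  have hf1zero : f1 0 = 0 := by
    simp [hf1_def]
  have hf1nn : ∀ x, 0 ≤ x → 0 ≤ f1 x := fun x hx => hf1zero ▸ hf1mono hx
  have hfmono : MonotoneOn f (Set.Ici 0) := by
    refine monotoneOn_of_deriv_nonneg (convex_Ici 0)
      (fun x _ => (hf x).differentiableAt.continuousAt.continuousWithinAt)
      (fun x _ => (hf x).differentiableAt.differentiableWithinAt) ?_
    intro x hx
    rw [(hf x).deriv]
    exact hf1nn x (le_of_lt (by simpa using hx))
  have hf0 : f 0 = 0 := by simp [hf_def]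
  have hfh : 0 ≤ f h := hf0 ▸ hfmono Set.self_mem_Ici hh hh
  -- now conclude
  have key : (1 - p) * Real.exp (-p * h) + p * Real.exp ((1 - p) * h)
      = Real.exp (-p * h) * (1 - p + p * Real.exp h) := by
    have : (1 - p) * h = -p * h + h := by ring
    rw [this, Real.exp_add]; ring
  rw [key]
  have : Real.exp (-p * h) * (1 - p + p * Real.exp h)
      = Real.exp (-p * h + Real.log (1 - p + p * Real.exp h)) := by
    rw [Real.exp_add, Real.exp_log (hDpos h)]
  rw [this]
  apply Real.exp_le_exp.2
  have : f h = h ^ 2 / 8 + p * h - Real.log (1 - p + p * Real.exp h) := rfl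
  linarith [hfh, this ▸ hfh]

lemma integrable_of_bdd {Ω : Type*} [MeasurableSpace Ω] {μ : Measure Ω} [IsFiniteMeasure μ]
    {f : Ω → ℝ} (hm : Measurable f) (C : ℝ) (h : ∀ ω, |f ω| ≤ C) : Integrable f μ :=
  (integrable_const C).mono' hm.aestronglyMeasurable (Filter.Eventually.of_forall fun ω => by
    simpa using h ω)

lemma mgf_le_hoeffding {Ω : Type*} [MeasurableSpace Ω] {μ : Measure Ω} [IsProbabilityMeasure μ]
    {X : Ω → ℝ} (hX : Measurable X) {a b : ℝ} (hab : a < b)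
    (hbd : ∀ ω, X ω ∈ Set.Icc a b) (hmean : ∫ ω, X ω ∂μ = 0) {t : ℝ} (ht : 0 ≤ t) :
    mgf X μ t ≤ Real.exp (t ^ 2 * (b - a) ^ 2 / 8) := by
  have hba : (0:ℝ) < b - a := by linarith
  have hXbd : ∀ ω, |X ω| ≤ max |a| |b| := by
    intro ω
    rcases hbd ω with ⟨h1, h2⟩
    rw [abs_le]
    constructor
    · calc -(max |a| |b|) ≤ -|a| := by simp [neg_le_neg_iff, le_max_left]
        _ ≤ a := neg_abs_le a
        _ ≤ X ω := h1
    · exact h2.trans ((le_abs_self b).trans (le_max_right _ _))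
  have hint : Integrable X μ := integrable_of_bdd hX _ hXbd
  have ha0 : a ≤ 0 := by
    have : a ≤ ∫ ω, X ω ∂μ := by
      calc a = ∫ _ : Ω, a ∂μ := by simp
        _ ≤ ∫ ω, X ω ∂μ := integral_mono (integrable_const a) hint (fun ω => (hbd ω).1)
    linarith [hmean ▸ this]
  have hb0 : 0 ≤ b := by
    have : (∫ ω, X ω ∂μ) ≤ b := by
      calc (∫ ω, X ω ∂μ) ≤ ∫ _ : Ω, b ∂μ :=
            integral_mono hint (integrable_const b) (fun ω => (hbd ω).2)
        _ = b := by simp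
    linarith [hmean ▸ this]
  -- pointwise convexity bound
  have hpt : ∀ ω, Real.exp (t * X ω) ≤
      (Real.exp (t * a) * b - Real.exp (t * b) * a) / (b - a)
        + X ω * ((Real.exp (t * b) - Real.exp (t * a)) / (b - a)) := by
    intro ω
    rcases hbd ω with ⟨h1, h2⟩
    set θ : ℝ := (b - X ω) / (b - a) with hθ
    have hθ0 : 0 ≤ θ := div_nonneg (by linarith) hba.le
    have hθ1 : 0 ≤ 1 - θ := by
      rw [sub_nonneg, hθ, div_le_one hba]; linarith
    have hconv := convexOn_exp.2 (Set.mem_univ (t * a)) (Set.mem_univ (t * b)) hθ0 hθ1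
      (by ring)
    have harg : θ • (t * a) + (1 - θ) • (t * b) = t * X ω := by
      rw [smul_eq_mul, smul_eq_mul, hθ]
      field_simp
      ring
    rw [harg] at hconv
    calc Real.exp (t * X ω) ≤ θ • Real.exp (t * a) + (1 - θ) • Real.exp (t * b) := hconv
      _ = _ := by rw [smul_eq_mul, smul_eq_mul, hθ]; field_simp; try ring
  -- integrate
  have hintexp : Integrable (fun ω => Real.exp (t * X ω)) μ := by
    apply integrable_of_bdd (by fun_prop) (Real.exp (t * max |a| |b|))
    intro ω
    rw [abs_of_pos (Real.exp_pos _)]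
    apply Real.exp_le_exp.2
    calc t * X ω ≤ |t * X ω| := le_abs_self _
      _ = t * |X ω| := by rw [abs_mul, abs_of_nonneg ht]
      _ ≤ t * max |a| |b| := by
          apply mul_le_mul_of_nonneg_left (hXbd ω) ht
  have hintrhs : Integrable (fun ω => (Real.exp (t * a) * b - Real.exp (t * b) * a) / (b - a)
        + X ω * ((Real.exp (t * b) - Real.exp (t * a)) / (b - a))) μ :=
    (integrable_const _).add (hint.mul_const _)
  have hmgf : mgf X μ t ≤ (Real.exp (t * a) * b - Real.exp (t * b) * a) / (b - a) := by
    calc mgf X μ t = ∫ ω, Real.exp (t * X ω) ∂μ := rfl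
      _ ≤ ∫ ω, ((Real.exp (t * a) * b - Real.exp (t * b) * a) / (b - a)
          + X ω * ((Real.exp (t * b) - Real.exp (t * a)) / (b - a))) ∂μ :=
        integral_mono hintexp hintrhs hpt
      _ = (Real.exp (t * a) * b - Real.exp (t * b) * a) / (b - a) := by
          rw [integral_add (integrable_const _) (hint.mul_const _), integral_const,
            integral_mul_const, hmean]
          simp
  -- apply hoeff_calc with p := -a/(b-a), h := t*(b-a)
  set p : ℝ := -a / (b - a) with hp
  have hp0 : 0 ≤ p := div_nonneg (by linarith) hba.le
  have hp1 : p ≤ 1 := by rw [hp, div_le_one hba]; linarith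
  have hh : 0 ≤ t * (b - a) := mul_nonneg ht hba.le
  have hkey := hoeff_calc hp0 hp1 hh
  have e1 : -p * (t * (b - a)) = t * a := by rw [hp]; field_simp; try ring
  have e2 : (1 - p) * (t * (b - a)) = t * b := by rw [hp]; field_simp; try ring
  have e3 : (1 - p) = b / (b - a) := by rw [hp]; field_simp; try ring
  rw [e1, e2] at hkey
  have e4 : (1 - p) * Real.exp (t * a) + p * Real.exp (t * b)
      = (Real.exp (t * a) * b - Real.exp (t * b) * a) / (b - a) := by
    rw [e3, hp]; field_simp; try ring
  rw [e4] at hkey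
  have e5 : (t * (b - a)) ^ 2 / 8 = t ^ 2 * (b - a) ^ 2 / 8 := by ring
  rw [e5] at hkey
  linarith

lemma tail_bound {Ω : Type*} [MeasurableSpace Ω] (μ : Measure Ω) [IsProbabilityMeasure μ]
    {q : ℕ} (hq : 0 < q) {Y : Fin q → Ω → ℝ} (hmeas : ∀ l, Measurable (Y l))
    (hindep : iIndepFun Y μ) {A B : ℝ} (hAB : A < B)
    (hbd : ∀ l ω, Y l ω ∈ Set.Icc A B) (hmean : ∀ l, ∫ ω, Y l ω ∂μ = 0)
    {ε : ℝ} (hε : 0 < ε) :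
    μ {ω | ε * (B - A) * q ≤ (∑ l, Y l) ω} ≤ ENNReal.ofReal (Real.exp (-2 * q * ε ^ 2)) := by
  have hBA : (0:ℝ) < B - A := by linarith
  set t : ℝ := 4 * ε / (B - A) with ht_def
  have ht : 0 < t := by positivity
  have hC : ∀ l ω, |Y l ω| ≤ max |A| |B| := by
    intro l ω
    rcases hbd l ω with ⟨h1, h2⟩
    rw [abs_le]
    constructor
    · calc -(max |A| |B|) ≤ -|A| := by simp [le_max_left]
        _ ≤ A := neg_abs_le A
        _ ≤ Y l ω := h1
    · exact h2.trans ((le_abs_self B).trans (le_max_right _ _))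
  have hSmeas : Measurable (∑ l, Y l) := by
    have : (∑ l, Y l) = fun ω => ∑ l, Y l ω := by funext ω; simp
    rw [this]
    exact Finset.measurable_sum _ (fun l _ => hmeas l)
  have hint : ∀ l, Integrable (fun ω => Real.exp (t * Y l ω)) μ := by
    intro l
    apply integrable_of_bdd (by fun_prop) (Real.exp (t * max |A| |B|))
    intro ω
    rw [abs_of_pos (Real.exp_pos _)]
    exact Real.exp_le_exp.2 (by
      calc t * Y l ω ≤ t * |Y l ω| := mul_le_mul_of_nonneg_left (le_abs_self _) ht.le
        _ ≤ t * max |A| |B| := mul_le_mul_of_nonneg_left (hC l ω) ht.le)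
  have hintS : Integrable (fun ω => Real.exp (t * (∑ l, Y l) ω)) μ := by
    apply integrable_of_bdd (by fun_prop) (Real.exp (t * (q * max |A| |B|)))
    intro ω
    rw [abs_of_pos (Real.exp_pos _)]
    apply Real.exp_le_exp.2
    have : |(∑ l, Y l) ω| ≤ q * max |A| |B| := by
      rw [Finset.sum_apply]
      calc |∑ l, Y l ω| ≤ ∑ l, |Y l ω| := Finset.abs_sum_le_sum_abs _ _
        _ ≤ ∑ _l : Fin q, max |A| |B| := Finset.sum_le_sum (fun l _ => hC l ω)
        _ = q * max |A| |B| := by simp [Finset.sum_const, mul_comm]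
    calc t * (∑ l, Y l) ω ≤ t * |(∑ l, Y l) ω| :=
        mul_le_mul_of_nonneg_left (le_abs_self _) ht.le
      _ ≤ t * (q * max |A| |B|) := mul_le_mul_of_nonneg_left this ht.le
  have hchern := measure_ge_le_exp_mul_mgf (μ := μ) (X := ∑ l, Y l) (ε * (B - A) * q) ht.le hintS
  have hmgfsum : mgf (∑ l, Y l) μ t = ∏ l, mgf (Y l) μ t :=
    hindep.mgf_sum hmeas Finset.univ
  have hprod : ∏ l, mgf (Y l) μ t ≤ Real.exp (t ^ 2 * (B - A) ^ 2 / 8) ^ q := by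
    calc ∏ l, mgf (Y l) μ t ≤ ∏ _l : Fin q, Real.exp (t ^ 2 * (B - A) ^ 2 / 8) :=
        Finset.prod_le_prod (fun l _ => mgf_nonneg)
          (fun l _ => mgf_le_hoeffding (hmeas l) hAB (hbd l) (hmean l) ht.le)
      _ = _ := by simp
  have hfinal : Real.exp (-t * (ε * (B - A) * q)) * Real.exp (t ^ 2 * (B - A) ^ 2 / 8) ^ q
      = Real.exp (-2 * q * ε ^ 2) := by
    rw [← Real.exp_nat_mul, ← Real.exp_add]
    congr 1
    rw [ht_def]
    field_simp
    ring
  have : (μ {ω | ε * (B - A) * q ≤ (∑ l, Y l) ω}).toReal ≤ Real.exp (-2 * q * ε ^ 2) := by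
    calc (μ {ω | ε * (B - A) * q ≤ (∑ l, Y l) ω}).toReal
        ≤ Real.exp (-t * (ε * (B - A) * q)) * mgf (∑ l, Y l) μ t := hchern
      _ ≤ Real.exp (-t * (ε * (B - A) * q)) * Real.exp (t ^ 2 * (B - A) ^ 2 / 8) ^ q := by
          rw [hmgfsum]
          exact mul_le_mul_of_nonneg_left hprod (Real.exp_pos _).le
      _ = _ := hfinal
  exact (ENNReal.le_ofReal_iff_toReal_le (measure_ne_top μ _) (Real.exp_pos _).le).2 this

/-- **Error bound for the diffusion degree estimator (Lemma 1).**
A node `u` has degree `D ≥ 1` and its neighbors have degrees `d : Fin D → ℝ` with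
`a ≤ d i ≤ b` and `a < b`. With `J 1, …, J q` (`q ≥ 1`) independent and each uniformly
distributed on `Fin D`, the estimate `DDS = λ·(D + (D/q)·∑ l, d (J l))` and the exact
value `DD = λ·(D + ∑ i, d i)` satisfy, for every `ε ∈ (0, 1)`,
`μ(|DDS − DD| ≥ ε·(b − a)·D·λ) ≤ 2·exp(−2·q·ε²)`. -/
theorem DDS_error_bound {Ω : Type*} [MeasurableSpace Ω]
    (μ : Measure Ω) [IsProbabilityMeasure μ]
    (D : ℕ) (hD : 1 ≤ D) (d : Fin D → ℝ)
    (a b : ℝ) (hab : a < b) (hbdd : ∀ i, d i ∈ Set.Icc a b)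
    (lam : ℝ) (hlam : 0 < lam)
    (q : ℕ) (hq : 1 ≤ q)
    (J : Fin q → Ω → Fin D) (hJ : ∀ l, Measurable (J l))
    (hindep : iIndepFun J μ)
    (hunif : ∀ l : Fin q, ∀ i : Fin D, μ ((J l) ⁻¹' {i}) = 1 / (D : ENNReal))
    (ε : ℝ) (hε : ε ∈ Set.Ioo (0 : ℝ) 1) :
    μ {ω | ε * (b - a) * (D : ℝ) * lam ≤
        |lam * ((D : ℝ) + ((D : ℝ) / (q : ℝ)) * ∑ l : Fin q, d (J l ω))
          - lam * ((D : ℝ) + ∑ i, d i)|}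
      ≤ ENNReal.ofReal (2 * Real.exp (-2 * q * ε ^ 2)) := by
  obtain ⟨hε0, hε1⟩ := hε
  have hD0 : (0:ℝ) < D := by exact_mod_cast hD
  have hq0 : (0:ℝ) < q := by exact_mod_cast hq
  set m : ℝ := (∑ i, d i) / D with hm_def
  have hdm : ∑ i, d i = D * m := by rw [hm_def]; field_simp
  have hdmeas : Measurable d := Measurable.of_discrete
  -- mean of d ∘ J l is m
  have hmean_comp : ∀ l, ∫ ω, d (J l ω) ∂μ = m := by
    intro l
    have hmap : IsProbabilityMeasure (μ.map (J l)) :=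
      Measure.isProbabilityMeasure_map (hJ l).aemeasurable
    have h1 : ∫ ω, d (J l ω) ∂μ = ∫ i, d i ∂(μ.map (J l)) :=
      (integral_map (hJ l).aemeasurable hdmeas.aestronglyMeasurable).symm
    have hintd : Integrable d (μ.map (J l)) :=
      integrable_of_bdd hdmeas (max |a| |b|) (fun i => by
        rcases hbdd i with ⟨h1, h2⟩
        rw [abs_le]
        constructor
        · calc -(max |a| |b|) ≤ -|a| := by simp [le_max_left]
            _ ≤ a := neg_abs_le a
            _ ≤ d i := h1
        · exact h2.trans ((le_abs_self b).trans (le_max_right _ _)))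
    rw [h1, integral_fintype _]
    have h2 : ∀ i : Fin D, ((μ.map (J l)) {i}).toReal = 1 / (D:ℝ) := by
      intro i
      rw [Measure.map_apply (hJ l) (MeasurableSet.singleton i), hunif l i, ENNReal.toReal_div]
      norm_num
    simp_rw [measureReal_def, h2, smul_eq_mul, one_div, inv_mul_eq_div]
    rw [← Finset.sum_div, hm_def]
    exact hintd
  -- the two centered families
  set Y : Fin q → Ω → ℝ := fun l => (fun i => d i - m) ∘ J l with hY_def
  set Y' : Fin q → Ω → ℝ := fun l => (fun i => m - d i) ∘ J l with hY'_def
  have hYmeas : ∀ l, Measurable (Y l) := fun l => Measurable.of_discrete.comp (hJ l)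
  have hY'meas : ∀ l, Measurable (Y' l) := fun l => Measurable.of_discrete.comp (hJ l)
  have hYindep : iIndepFun Y μ :=
    hindep.comp (fun _ i => d i - m) (fun _ => Measurable.of_discrete)
  have hY'indep : iIndepFun Y' μ :=
    hindep.comp (fun _ i => m - d i) (fun _ => Measurable.of_discrete)
  have hYbd : ∀ l ω, Y l ω ∈ Set.Icc (a - m) (b - m) := by
    intro l ω
    rcases hbdd (J l ω) with ⟨h1, h2⟩
    exact ⟨by simp [hY_def]; linarith, by simp [hY_def]; linarith⟩
  have hY'bd : ∀ l ω, Y' l ω ∈ Set.Icc (m - b) (m - a) := by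
    intro l ω
    rcases hbdd (J l ω) with ⟨h1, h2⟩
    exact ⟨by simp [hY'_def]; linarith, by simp [hY'_def]; linarith⟩
  have hintcomp : ∀ l, Integrable (fun ω => d (J l ω)) μ := by
    intro l
    apply integrable_of_bdd (hdmeas.comp (hJ l)) (max |a| |b|)
    intro ω
    rcases hbdd (J l ω) with ⟨h1, h2⟩
    rw [abs_le]
    constructor
    · calc -(max |a| |b|) ≤ -|a| := by simp [le_max_left]
        _ ≤ a := neg_abs_le a
        _ ≤ d (J l ω) := h1
    · exact h2.trans ((le_abs_self b).trans (le_max_right _ _))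
  have hYmean : ∀ l, ∫ ω, Y l ω ∂μ = 0 := by
    intro l
    have : (fun ω => Y l ω) = fun ω => d (J l ω) - m := rfl
    rw [this, integral_sub (hintcomp l) (integrable_const m), hmean_comp l, integral_const]
    simp
  have hY'mean : ∀ l, ∫ ω, Y' l ω ∂μ = 0 := by
    intro l
    have : (fun ω => Y' l ω) = fun ω => m - d (J l ω) := rfl
    rw [this, integral_sub (integrable_const m) (hintcomp l), hmean_comp l, integral_const]
    simp
  -- rewrite the event
  have hsum : ∀ ω, (∑ l, Y l) ω = (∑ l : Fin q, d (J l ω)) - q * m := by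
    intro ω
    rw [Finset.sum_apply]
    have : ∀ l : Fin q, Y l ω = d (J l ω) - m := fun l => rfl
    simp_rw [this, Finset.sum_sub_distrib, Finset.sum_const, Finset.card_univ,
      Fintype.card_fin, nsmul_eq_mul]
  have hsum' : ∀ ω, (∑ l, Y' l) ω = -((∑ l, Y l) ω) := by
    intro ω
    rw [Finset.sum_apply, Finset.sum_apply]
    simp [hY_def, hY'_def]
  have hset : {ω | ε * (b - a) * (D : ℝ) * lam ≤
        |lam * ((D : ℝ) + ((D : ℝ) / (q : ℝ)) * ∑ l : Fin q, d (J l ω))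
          - lam * ((D : ℝ) + ∑ i, d i)|}
      = {ω | ε * (b - a) * q ≤ |(∑ l, Y l) ω|} := by
    ext ω
    simp only [Set.mem_setOf_eq]
    have h1 : lam * ((D : ℝ) + ((D : ℝ) / (q : ℝ)) * ∑ l : Fin q, d (J l ω))
          - lam * ((D : ℝ) + ∑ i, d i) = (lam * D / q) * ((∑ l, Y l) ω) := by
      rw [hsum ω, hdm]
      field_simp
      ring
    rw [h1, abs_mul, abs_of_pos (by positivity : (0:ℝ) < lam * D / q)]
    have h2 : ε * (b - a) * (D : ℝ) * lam = (lam * D / q) * (ε * (b - a) * q) := by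
      field_simp
    rw [h2]
    exact mul_le_mul_iff_right₀ (by positivity)
  rw [hset]
  -- split into two tails
  have hsub : {ω | ε * (b - a) * q ≤ |(∑ l, Y l) ω|}
      ⊆ {ω | ε * (b - a) * q ≤ (∑ l, Y l) ω} ∪ {ω | ε * (b - a) * q ≤ (∑ l, Y' l) ω} := by
    intro ω hω
    simp only [Set.mem_setOf_eq] at hω
    rcases le_abs.1 hω with h | h
    · exact Or.inl h
    · exact Or.inr (by rw [Set.mem_setOf_eq, hsum' ω]; exact h)
  calc μ {ω | ε * (b - a) * q ≤ |(∑ l, Y l) ω|}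
      ≤ μ ({ω | ε * (b - a) * q ≤ (∑ l, Y l) ω} ∪ {ω | ε * (b - a) * q ≤ (∑ l, Y' l) ω}) :=
        measure_mono hsub
    _ ≤ μ {ω | ε * (b - a) * q ≤ (∑ l, Y l) ω} + μ {ω | ε * (b - a) * q ≤ (∑ l, Y' l) ω} :=
        measure_union_le _ _
    _ ≤ ENNReal.ofReal (Real.exp (-2 * q * ε ^ 2)) + ENNReal.ofReal (Real.exp (-2 * q * ε ^ 2)) := by
        gcongr
        · have := tail_bound μ (Nat.pos_of_ne_zero (by omega)) hYmeas hYindep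
            (show a - m < b - m by linarith) hYbd hYmean hε0
          simpa [show (b - m) - (a - m) = b - a by ring] using this
        · have := tail_bound μ (Nat.pos_of_ne_zero (by omega)) hY'meas hY'indep
            (show m - b < m - a by linarith) hY'bd hY'mean hε0
          simpa [show (m - a) - (m - b) = b - a by ring] using this
    _ = ENNReal.ofReal (2 * Real.exp (-2 * q * ε ^ 2)) := by
        rw [← ENNReal.ofReal_add (Real.exp_pos _).le (Real.exp_pos _).le, two_mul]
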